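/- arXiv:2502.04195 — 2 statements merged into one kernel-verified Lean document; each statement's English description precedes it below -/
import Mathlib

section
/- Let M_prior be a constrained matrix zonotope in ℝ^{n×(n+m)} with generators G_{θ,1},…,G_{θ,sθ}, center C_θ, constraint matrices A_{θ,i} ∈ ℝ^{nθ×T} and constraint offset B_θ ∈ ℝ^{nθ×T}, and let M_w be a constrained matrix zonotope in ℝ^{n×T} with generators G_{w,1},…,G_{w,sw}, center C_w, constraint matrices A_{w,i} ∈ ℝ^{nw×T} and constraint offset B_w ∈ ℝ^{nw×T}. Let D_0 ∈ ℝ^{(n+m)×T} and X_1 ∈ ℝ^{n×T}. Then the set of disturbance matrices consistent with both data and prior knowledge, {W ∈ M_w : ∃ θ ∈ M_prior, W = X_1 − θ D_0}, equals the constrained matrix zonotope in ℝ^{n×T} with s_w + s_θ generators given by Ĝ_i = G_{w,i} for i ≤ s_w and Ĝ_i = 0 for s_w < i ≤ s_w + s_θ, center C_w, constraint matrices obtained, in terms of the combined coefficient vector ζ = (β, γ) with β ∈ ℝ^{sw}, γ ∈ ℝ^{sθ}, by the three constraint blocks Σ_i β_i A_{w,i} = B_w, Σ_i γ_i A_{θ,i}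 = B_θ, and Σ_i β_i G_{w,i} + Σ_i γ_i G_{θ,i} D_0 = X_1 − C_θ D_0 − C_w. -/
/-- The constrained matrix zonotope
`K((Gᵢ),C,(Aᵢ),B) = {X : ∃ ζ, X = Σ ζᵢ Gᵢ + C, ‖ζ‖_∞ ≤ 1, Σ ζᵢ Aᵢ = B}`. -/
def constrainedMatrixZonotope {ν π μ ρ σ : Type*} [Fintype σ]
    (G : σ → Matrix ν π ℝ) (C : Matrix ν π ℝ)
    (A : σ → Matrix μ ρ ℝ) (B : Matrix μ ρ ℝ) : Set (Matrix ν π ℝ) :=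
  {X | ∃ ζ : σ → ℝ, (∀ i, |ζ i| ≤ 1) ∧ (∑ i, ζ i • A i) = B ∧ X = (∑ i, ζ i • G i) + C}

/-!
Write the coefficient vector of the combined zonotope as `ζ = (β, γ)`, with `β` describing
`W = Σ βᵢ G_{w,i} + C_w ∈ M_w` and `γ` describing `θ = Σ γᵢ G_{θ,i} + C_θ ∈ M_prior`. Since
`θ ↦ θ D₀` is linear, `W = X₁ - θ D₀` is the linear constraint
`Σ βᵢ G_{w,i} + Σ γᵢ G_{θ,i} D₀ = X₁ - C_θ D₀ - C_w` on `ζ`, and stacking it under the constraints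
of `M_w` and `M_prior` with `fromRows` gives a single constraint `Σ ζᵢ Âᵢ = B̂`.
-/

namespace Matrix

variable {α R ι m₁ m₂ n : Type*}

lemma fromRows_add [Add R] (A₁ B₁ : Matrix m₁ n R) (A₂ B₂ : Matrix m₂ n R) :
    fromRows A₁ A₂ + fromRows B₁ B₂ = fromRows (A₁ + B₁) (A₂ + B₂) := by
  ext (_ | _) _ <;> rfl

lemma smul_fromRows [SMul α R] (c : α) (A₁ : Matrix m₁ n R) (A₂ : Matrix m₂ n R) :
    c • fromRows A₁ A₂ = fromRows (c • A₁) (c • A₂) := by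
  ext (_ | _) _ <;> rfl

lemma sum_fromRows [AddCommMonoid R] (s : Finset ι) (A₁ : ι → Matrix m₁ n R)
    (A₂ : ι → Matrix m₂ n R) :
    ∑ i ∈ s, fromRows (A₁ i) (A₂ i) = fromRows (∑ i ∈ s, A₁ i) (∑ i ∈ s, A₂ i) := by
  ext (_ | _) _ <;> simp [sum_apply]

end Matrix

open Matrix

lemma mem_constrainedMatrixZonotope_sumElim_iff {ν π μ ρ σ τ : Type*} [Fintype σ] [Fintype τ]
    (G : σ → Matrix ν π ℝ) (G' : τ → Matrix ν π ℝ) (C : Matrix ν π ℝ)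
    (A : σ → Matrix μ ρ ℝ) (A' : τ → Matrix μ ρ ℝ) (B : Matrix μ ρ ℝ) (X : Matrix ν π ℝ) :
    X ∈ constrainedMatrixZonotope (Sum.elim G G') C (Sum.elim A A') B ↔
      ∃ β : σ → ℝ, ∃ γ : τ → ℝ, (∀ i, |β i| ≤ 1) ∧ (∀ j, |γ j| ≤ 1) ∧
        ∑ i, β i • A i + ∑ j, γ j • A' j = B ∧ X = ∑ i, β i • G i + ∑ j, γ j • G' j + C := by
  simp only [constrainedMatrixZonotope, Set.mem_ofPred_eq, Fintype.sum_sum_type, Sum.elim_inl,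
    Sum.elim_inr]
  constructor
  · rintro ⟨ζ, hζ, hA, hX⟩
    exact ⟨ζ ∘ Sum.inl, ζ ∘ Sum.inr, fun i => hζ _, fun j => hζ _, hA, hX⟩
  · rintro ⟨β, γ, hβ, hγ, hA, hX⟩
    exact ⟨Sum.elim β γ, Sum.forall.2 ⟨hβ, hγ⟩, hA, hX⟩

/-- The set of disturbance matrices consistent with both data and prior knowledge,
`{W ∈ M_w : ∃ θ ∈ M_prior, W = X₁ − θD₀}`, is the constrained matrix zonotope with
`s_w + s_θ` generators `(G_{w,i}, 0)`, center `C_w`, and three constraint blocks: in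
terms of the combined coefficient vector `ζ = (β, γ)`, the blocks read
`Σᵢ βᵢ A_{w,i} = B_w`, `Σᵢ γᵢ A_{θ,i} = B_θ` and
`Σᵢ βᵢ G_{w,i} + Σᵢ γᵢ G_{θ,i}D₀ = X₁ − C_θD₀ − C_w`. -/
theorem disturbance_set_data_and_prior
    {n nm T sθ sw nθ nw : ℕ}
    (Gθ : Fin sθ → Matrix (Fin n) (Fin nm) ℝ) (Cθ : Matrix (Fin n) (Fin nm) ℝ)
    (Aθ : Fin sθ → Matrix (Fin nθ) (Fin T) ℝ) (Bθ : Matrix (Fin nθ) (Fin T) ℝ)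
    (Gw : Fin sw → Matrix (Fin n) (Fin T) ℝ) (Cw : Matrix (Fin n) (Fin T) ℝ)
    (Aw : Fin sw → Matrix (Fin nw) (Fin T) ℝ) (Bw : Matrix (Fin nw) (Fin T) ℝ)
    (D₀ : Matrix (Fin nm) (Fin T) ℝ) (X₁ : Matrix (Fin n) (Fin T) ℝ) :
    {W ∈ constrainedMatrixZonotope Gw Cw Aw Bw |
        ∃ θ ∈ constrainedMatrixZonotope Gθ Cθ Aθ Bθ, W = X₁ - θ * D₀}
      = constrainedMatrixZonotope
          (Sum.elim Gw (fun _ : Fin sθ => (0 : Matrix (Fin n) (Fin T) ℝ)))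
          Cw
          (Sum.elim
            (fun i : Fin sw => Matrix.fromRows (Aw i)
              (Matrix.fromRows (0 : Matrix (Fin nθ) (Fin T) ℝ) (Gw i)))
            (fun i : Fin sθ => Matrix.fromRows (0 : Matrix (Fin nw) (Fin T) ℝ)
              (Matrix.fromRows (Aθ i) (Gθ i * D₀))))
          (Matrix.fromRows Bw (Matrix.fromRows Bθ (X₁ - Cθ * D₀ - Cw))) := by
  have image_mul_D₀ (γ : Fin sθ → ℝ) :
      (∑ i, γ i • Gθ i + Cθ) * D₀ = ∑ i, γ i • (Gθ i * D₀) + Cθ * D₀ := by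
    simp only [Matrix.add_mul, Matrix.sum_mul, Matrix.smul_mul]
  ext W
  rw [Set.mem_sep_iff, mem_constrainedMatrixZonotope_sumElim_iff]
  simp only [constrainedMatrixZonotope, Set.mem_ofPred_eq, smul_fromRows, smul_zero,
    sum_fromRows, Finset.sum_const_zero, fromRows_add, fromRows_ext_iff, add_zero, zero_add]
  constructor
  · rintro ⟨⟨β, hβ, hAw, rfl⟩, _, ⟨γ, hγ, hAθ, rfl⟩, hW⟩
    rw [image_mul_D₀] at hW
    exact ⟨β, γ, hβ, hγ, ⟨hAw, hAθ, by linear_combination (norm := module) hW⟩, rfl⟩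
  · rintro ⟨β, γ, hβ, hγ, ⟨hAw, hAθ, hX₁⟩, rfl⟩
    refine ⟨⟨β, hβ, hAw, rfl⟩, _, ⟨γ, hγ, hAθ, rfl⟩, ?_⟩
    rw [image_mul_D₀]
    linear_combination (norm := module) hX₁
end

section
/- Let K be a constrained matrix zonotope of dimension (n,n) with generators G_1,…,G_s ∈ ℝ^{n×n}, center C ∈ ℝ^{n×n}, constraint matrices A_1,…,A_s ∈ ℝ^{m×r} and constraint offset B ∈ ℝ^{m×r}, and let Z_w = C(G_h, c_h, A_h, b_h) be a constrained zonotope in ℝ^n with G_h ∈ ℝ^{n×sw}, A_h ∈ ℝ^{nw×sw}, b_h ∈ ℝ^{nw}. Fix x ∈ ℝ^n. Then the set of all possible next states {M x + w : M ∈ K, w ∈ Z_w} equals the constrained zonotope in ℝ^n with generator matrix [G_1 x ⋯ G_s x G_h] ∈ ℝ^{n×(s+sw)}, center C x + c_h, constraint matrix the block-diagonal matrix with blocks [vec(A_1) ⋯ vec(A_s)] ∈ ℝ^{mr×s} and A_h ∈ ℝ^{nw×sw}, and constraint vector obtained by stacking vec(B) over b_h. -/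
/-- The constrained zonotope `C(G,c,A,b) = {x : ∃ ζ, x = Gζ + c, ‖ζ‖_∞ ≤ 1, Aζ = b}`. -/
def constrainedZonotope {ν σ κ : Type*} [Fintype σ]
    (G : Matrix ν σ ℝ) (c : ν → ℝ) (A : Matrix κ σ ℝ) (b : κ → ℝ) : Set (ν → ℝ) :=
  {x | ∃ ζ : σ → ℝ, (∀ i, |ζ i| ≤ 1) ∧ A.mulVec ζ = b ∧ x = G.mulVec ζ + c}

/-! The map `M ↦ M x` is linear, so it sends the constrained matrix zonotope `K` to the
constrained zonotope with generators `Gᵢ x`, center `C x` and the same constraint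
`Σ ζᵢ Aᵢ = B`, written in vectorized form. The set of next states is the Minkowski sum of this
zonotope with `Z_w`, and a Minkowski sum of constrained zonotopes is the constrained zonotope
whose factor vector concatenates the two factor vectors, which is where the block-diagonal
constraint comes from. -/

open Matrix Pointwise

theorem Matrix.of_mulVec_eq_sum_smul_mulVec {R ν π σ : Type*} [CommSemiring R]
    [Fintype π] [Fintype σ] (G : σ → Matrix ν π R) (x : π → R) (ζ : σ → R) :
    (of fun j i => (G i *ᵥ x) j) *ᵥ ζ = (∑ i, ζ i • G i) *ᵥ x := by
  simp only [sum_mulVec, smul_mulVec]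
  ext j
  simp [mulVec, dotProduct, mul_comm]

theorem Matrix.of_mulVec_eq_uncurry_iff_sum_smul_eq {R μ ρ σ : Type*} [CommSemiring R]
    [Fintype σ] (A : σ → Matrix μ ρ R) (B : Matrix μ ρ R) (ζ : σ → R) :
    (of fun (kl : μ × ρ) i => A i kl.1 kl.2) *ᵥ ζ = (fun kl : μ × ρ => B kl.1 kl.2) ↔
      ∑ i, ζ i • A i = B := by
  have hvec : (of fun (kl : μ × ρ) i => A i kl.1 kl.2) *ᵥ ζ =
      fun kl => (∑ i, ζ i • A i) kl.1 kl.2 := by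
    ext kl
    simp [mulVec, dotProduct, sum_apply, mul_comm]
  rw [hvec, funext_iff, Prod.forall, ← Matrix.ext_iff]

theorem constrainedZonotope_fromCols_fromBlocks {ν σ₁ σ₂ κ₁ κ₂ : Type*}
    [Fintype σ₁] [Fintype σ₂]
    (G₁ : Matrix ν σ₁ ℝ) (G₂ : Matrix ν σ₂ ℝ) (c₁ c₂ : ν → ℝ)
    (A₁ : Matrix κ₁ σ₁ ℝ) (A₂ : Matrix κ₂ σ₂ ℝ) (b₁ : κ₁ → ℝ) (b₂ : κ₂ → ℝ) :
    constrainedZonotope (fromCols G₁ G₂) (c₁ + c₂) (fromBlocks A₁ 0 0 A₂) (Sum.elim b₁ b₂) =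
      constrainedZonotope G₁ c₁ A₁ b₁ + constrainedZonotope G₂ c₂ A₂ b₂ := by
  have hA (ζ₁ : σ₁ → ℝ) (ζ₂ : σ₂ → ℝ) :
      fromBlocks A₁ 0 0 A₂ *ᵥ Sum.elim ζ₁ ζ₂ = Sum.elim b₁ b₂ ↔
        A₁ *ᵥ ζ₁ = b₁ ∧ A₂ *ᵥ ζ₂ = b₂ := by
    simp [fromBlocks_mulVec, Sum.elim_eq_iff]
  ext y
  simp only [constrainedZonotope, Set.mem_add, Set.mem_ofPred_eq]
  constructor
  · rintro ⟨ζ, hζ, hAζ, rfl⟩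
    obtain ⟨ζ₁, ζ₂, rfl⟩ : ∃ ζ₁ ζ₂, ζ = Sum.elim ζ₁ ζ₂ := ⟨_, _, (Sum.elim_comp_inl_inr ζ).symm⟩
    obtain ⟨hA₁, hA₂⟩ := (hA ζ₁ ζ₂).1 hAζ
    refine ⟨_, ⟨ζ₁, fun i => hζ (.inl i), hA₁, rfl⟩, _, ⟨ζ₂, fun i => hζ (.inr i), hA₂, rfl⟩, ?_⟩
    rw [fromCols_mulVec_sumElim]
    abel
  · rintro ⟨_, ⟨ζ₁, h₁, hA₁, rfl⟩, _, ⟨ζ₂, h₂, hA₂, rfl⟩, rfl⟩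
    refine ⟨Sum.elim ζ₁ ζ₂, Sum.forall.2 ⟨h₁, h₂⟩, (hA ζ₁ ζ₂).2 ⟨hA₁, hA₂⟩, ?_⟩
    rw [fromCols_mulVec_sumElim]
    abel

theorem image_mulVec_constrainedMatrixZonotope {ν π μ ρ σ : Type*} [Fintype π] [Fintype σ]
    (G : σ → Matrix ν π ℝ) (C : Matrix ν π ℝ)
    (A : σ → Matrix μ ρ ℝ) (B : Matrix μ ρ ℝ) (x : π → ℝ) :
    (· *ᵥ x) '' constrainedMatrixZonotope G C A B =
      constrainedZonotope (of fun j i => (G i *ᵥ x) j) (C *ᵥ x)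
        (of fun (kl : μ × ρ) i => A i kl.1 kl.2) (fun kl : μ × ρ => B kl.1 kl.2) := by
  ext y
  simp only [constrainedMatrixZonotope, constrainedZonotope, Set.mem_image, Set.mem_ofPred_eq,
    of_mulVec_eq_uncurry_iff_sum_smul_eq, of_mulVec_eq_sum_smul_mulVec]
  constructor
  · rintro ⟨_, ⟨ζ, hζ, hA, rfl⟩, rfl⟩
    exact ⟨ζ, hζ, hA, add_mulVec _ _ _⟩
  · rintro ⟨ζ, hζ, hA, rfl⟩
    exact ⟨_, ⟨ζ, hζ, hA, rfl⟩, add_mulVec _ _ _⟩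

/-- For a constrained matrix zonotope `K` of closed-loop matrices, a constrained
zonotope `Z_w = C(G_h,c_h,A_h,b_h)` of disturbances, and a fixed state `x`, the set of
all possible next states `{Mx + w : M ∈ K, w ∈ Z_w}` is the constrained zonotope with
generator matrix `[G₁x ⋯ G_s x  G_h]`, center `Cx + c_h`, block-diagonal constraint
matrix `blockdiag([vec(A₁) ⋯ vec(A_s)], A_h)` and constraint vector `[vec(B); b_h]`. -/
theorem next_state_constrainedZonotope
    {n m r s sw nw : ℕ}
    (G : Fin s → Matrix (Fin n) (Fin n) ℝ) (C : Matrix (Fin n) (Fin n) ℝ)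
    (A : Fin s → Matrix (Fin m) (Fin r) ℝ) (B : Matrix (Fin m) (Fin r) ℝ)
    (Gh : Matrix (Fin n) (Fin sw) ℝ) (ch : Fin n → ℝ)
    (Ah : Matrix (Fin nw) (Fin sw) ℝ) (bh : Fin nw → ℝ)
    (x : Fin n → ℝ) :
    {y : Fin n → ℝ | ∃ M ∈ constrainedMatrixZonotope G C A B,
        ∃ w ∈ constrainedZonotope Gh ch Ah bh, y = M.mulVec x + w}
      = constrainedZonotope
          (Matrix.fromCols (Matrix.of fun j (i : Fin s) => (G i).mulVec x j) Gh)
          (C.mulVec x + ch)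
          (Matrix.fromBlocks
            (Matrix.of fun (kl : Fin m × Fin r) (i : Fin s) => A i kl.1 kl.2) 0 0 Ah)
          (Sum.elim (fun kl : Fin m × Fin r => B kl.1 kl.2) bh) := by
  rw [constrainedZonotope_fromCols_fromBlocks, ← image_mulVec_constrainedMatrixZonotope,
    ← Set.image2_add, Set.image2_image_left]
  ext y
  simp only [Set.mem_image2, Set.mem_ofPred_eq, eq_comm]
end
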